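/- Let J be an ideal of the algebra A (a subspace with z w ∈ J for all z ∈ A and w ∈ J). Then either J contains the subspace spanned by {f_1 − f_i : 2 ≤ i ≤ n} ∪ {f_1 + g_k : 2 ≤ k ≤ ν}, or J is contained in the subspace W = { Σ_{i=2}^n a_i f_i + Σ_{k=2}^ν b_k g_k : Σ_{i=2}^n a_i = 0 and Σ_{k=2}^ν b_k = 0 }. -/

import Mathlib

/-!
If some `w ∈ J` has nonzero `f₁`-coordinate `c`, then `f_i w = (c/2)(f₁ - f_i)` and
`g_k w = (c/2)(f₁ + g_k)`, so `J` contains all these elements. Otherwise every element of `J`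
has zero `f₁`-coordinate; for `z ∈ J` with `a = Σ_{i ≥ 2} z_i` and `b = Σ_k z_{g_k}`, the
elements `f₁ z` and `f₁ (f₁ z)` of `J` have `f₁`-coordinates `(a + b)/2` and `(b - a)/4`,
which forces `a = b = 0`.
-/

open Finset

/-- The commutative bilinear multiplication of the quotient algebra
`A = 𝓑₁/⟨e^f_1 + e^m_1⟩` of dimension `(n+2) + (ν+1)` with basis
`f_1,…,f_{n+2}` (index `0` is `f_1`) and `g_2,…,g_{ν+2}`, determined by
`f_1 f_i = ½(f_1 − f_i)` for `i ≥ 2`, `f_1 g_k = ½(f_1 + g_k)`, all other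
basis products being zero. -/
noncomputable def mulA (n ν : ℕ)
    (z w : (Fin (n + 2) → ℝ) × (Fin (ν + 1) → ℝ)) :
    (Fin (n + 2) → ℝ) × (Fin (ν + 1) → ℝ) :=
  (fun i =>
    if i = 0 then
      (1 / 2) * ((∑ j : Fin (n + 2), if j = 0 then 0 else
          (z.1 0 * w.1 j + w.1 0 * z.1 j)) +
        ∑ k : Fin (ν + 1), (z.1 0 * w.2 k + w.1 0 * z.2 k))
    else -(1 / 2) * (z.1 0 * w.1 i + w.1 0 * z.1 i),
   fun k => (1 / 2) * (z.1 0 * w.2 k + w.1 0 * z.2 k))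

namespace mulA

variable {n ν : ℕ}

lemma f₁_mul_fst_zero (w : (Fin (n + 2) → ℝ) × (Fin (ν + 1) → ℝ)) :
    (mulA n ν (Pi.single 0 1, 0) w).1 0 =
      (1 / 2) * (∑ i : Fin (n + 1), w.1 i.succ + ∑ k, w.2 k) := by
  simp [mulA, Fin.sum_univ_succ, Fin.succ_ne_zero]

lemma f₁_mul_fst_succ (w : (Fin (n + 2) → ℝ) × (Fin (ν + 1) → ℝ)) (i : Fin (n + 1)) :
    (mulA n ν (Pi.single 0 1, 0) w).1 i.succ = -(1 / 2) * w.1 i.succ := by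
  simp [mulA, Fin.succ_ne_zero]

lemma f₁_mul_snd (w : (Fin (n + 2) → ℝ) × (Fin (ν + 1) → ℝ)) :
    (mulA n ν (Pi.single 0 1, 0) w).2 = (1 / 2 : ℝ) • w.2 := by
  ext k; simp [mulA]

lemma f_mul_eq_smul (w : (Fin (n + 2) → ℝ) × (Fin (ν + 1) → ℝ)) {i : Fin (n + 2)}
    (hi : i ≠ 0) :
    mulA n ν (Pi.single i 1, 0) w = (w.1 0 / 2) • (Pi.single 0 1 - Pi.single i 1, 0) := by
  ext j
  · by_cases hj : j = 0
    · subst hj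
      have hsum : (∑ j : Fin (n + 2),
          if j = 0 then (0 : ℝ) else w.1 0 * (Pi.single i 1 : Fin (n + 2) → ℝ) j) = w.1 0 := by
        rw [Finset.sum_eq_single i] <;> simp +contextual [hi]
      simp [mulA, hi, hsum]; ring
    · by_cases hji : j = i
      · subst hji; simp [mulA, hi]; ring
      · simp [mulA, hi, hj, hji]
  · simp [mulA, hi]

lemma g_mul_eq_smul (w : (Fin (n + 2) → ℝ) × (Fin (ν + 1) → ℝ)) (k : Fin (ν + 1)) :
    mulA n ν (0, Pi.single k 1) w = (w.1 0 / 2) • (Pi.single 0 1, Pi.single k 1) := by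
  ext j
  · by_cases hj : j = 0
    · subst hj; simp [mulA, ← Finset.mul_sum]; ring
    · simp [mulA, hj]
  · simp [mulA, Pi.single_apply]; split_ifs <;> ring

lemma sums_eq_zero_of_f₁_mul_fst_zero (z : (Fin (n + 2) → ℝ) × (Fin (ν + 1) → ℝ))
    (h₁ : (mulA n ν (Pi.single 0 1, 0) z).1 0 = 0)
    (h₂ : (mulA n ν (Pi.single 0 1, 0) (mulA n ν (Pi.single 0 1, 0) z)).1 0 = 0) :
    ∑ i : Fin (n + 1), z.1 i.succ = 0 ∧ ∑ k, z.2 k = 0 := by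
  simp only [f₁_mul_fst_zero, f₁_mul_fst_succ, f₁_mul_snd, Pi.smul_apply,
    smul_eq_mul, ← Finset.mul_sum] at h₁ h₂
  constructor <;> linarith

end mulA

/-- Any ideal `J` of the quotient algebra either contains all the elements
`f_1 − f_i` (`i ≥ 2`) and `f_1 + g_k`, or is contained in the subspace
`W = {Σ a_i f_i + Σ b_k g_k : a_1 = 0, Σ a_i = 0, Σ b_k = 0}`. -/
theorem ideals_of_quotient_algebra (n ν : ℕ)
    (J : Submodule ℝ ((Fin (n + 2) → ℝ) × (Fin (ν + 1) → ℝ)))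
    (hJ : ∀ z w, w ∈ J → mulA n ν z w ∈ J) :
    ((∀ i : Fin (n + 2), i ≠ 0 →
        (((Pi.single 0 1 : Fin (n + 2) → ℝ) - Pi.single i 1),
          (0 : Fin (ν + 1) → ℝ)) ∈ J) ∧
      (∀ k : Fin (ν + 1),
        ((Pi.single 0 1 : Fin (n + 2) → ℝ),
          (Pi.single k 1 : Fin (ν + 1) → ℝ)) ∈ J)) ∨
    (∀ z ∈ J, z.1 0 = 0 ∧ (∑ i, z.1 i) = 0 ∧ (∑ k, z.2 k) = 0) := by
  by_cases hW : ∀ w ∈ J, w.1 0 = 0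
  · right
    intro z hz
    have hez := hJ (Pi.single 0 1, 0) z hz
    obtain ⟨hf, hg⟩ := mulA.sums_eq_zero_of_f₁_mul_fst_zero z (hW _ hez) (hW _ (hJ _ _ hez))
    exact ⟨hW z hz, by rw [Fin.sum_univ_succ, hW z hz, hf, add_zero], hg⟩
  · left
    obtain ⟨w, hw, hw0⟩ := not_forall₂.mp hW
    have hc : w.1 0 / 2 ≠ 0 := div_ne_zero hw0 two_ne_zero
    refine ⟨fun i hi => ?_, fun k => ?_⟩
    · rw [← J.smul_mem_iff hc, ← mulA.f_mul_eq_smul w hi]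
      exact hJ _ w hw
    · rw [← J.smul_mem_iff hc, ← mulA.g_mul_eq_smul w k]
      exact hJ _ w hw
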